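/- arXiv:2006.07582 — 4 statements merged into one kernel-verified Lean document; each statement's English description precedes it below -/
import Mathlib

section
/- Let H be a bounded self-adjoint operator on a complex Hilbert space, let ξ ∈ ℝ, δ > 0, ε ≥ 0, and let f be a vector with ‖f‖ = 1. Let φ : ℝ → ℝ be continuous with 0 ≤ φ(t) ≤ 1 for all t and with φ(t) = 0 whenever |t − ξ| > δ. If ‖f − φ(H) f‖ ≤ ε, then ‖Hf − ξf‖ ≤ δ + ‖H − ξ·I‖·ε. -/
/-!
Put `ψ t = (t - ξ) φ t`. Since `φ` takes values in `[0, 1]` and vanishes where `|t - ξ| > δ`,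
`|ψ| ≤ δ`, so `‖ψ(H)‖ ≤ δ`. Multiplicativity of the functional calculus gives
`ψ(H) = (H - ξ) φ(H)`, hence `Hf - ξf = (H - ξ)(f - φ(H) f) + ψ(H) f`, and the two terms are
bounded by `‖H - ξ‖ ε` and `δ`.
-/

lemma abs_sub_mul_le_of_vanishing {φ : ℝ → ℝ} {ξ δ : ℝ} (hδ : 0 ≤ δ) (hφ0 : ∀ t, 0 ≤ φ t)
    (hφ1 : ∀ t, φ t ≤ 1) (hφsupp : ∀ t, δ < |t - ξ| → φ t = 0) (t : ℝ) :
    |(t - ξ) * φ t| ≤ δ := by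
  rcases le_or_gt |t - ξ| δ with hnear | hfar
  · rw [abs_mul, abs_of_nonneg (hφ0 t)]
    exact (mul_le_of_le_one_right (abs_nonneg _) (hφ1 t)).trans hnear
  · simp [hφsupp t hfar, hδ]

section FunctionalCalculus

variable {A : Type*}

lemma cfc_sub_const_mul [Ring A] [StarRing A] [Algebra ℝ A] [TopologicalSpace A]
    [ContinuousFunctionalCalculus ℝ A IsSelfAdjoint] {φ : ℝ → ℝ} (hφ : Continuous φ) (ξ : ℝ)
    {a : A} (ha : IsSelfAdjoint a) :
    cfc (fun t => (t - ξ) * φ t) a = (a - algebraMap ℝ A ξ) * cfc φ a := by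
  rw [cfc_mul _ _ a, cfc_sub _ _ a, cfc_id' ℝ a, cfc_const ξ a]

lemma norm_cfc_sub_mul_le [NormedRing A] [StarRing A] [NormedAlgebra ℝ A]
    [IsometricContinuousFunctionalCalculus ℝ A IsSelfAdjoint] {φ : ℝ → ℝ} {ξ δ : ℝ}
    (hδ : 0 ≤ δ) (hφ0 : ∀ t, 0 ≤ φ t) (hφ1 : ∀ t, φ t ≤ 1)
    (hφsupp : ∀ t, δ < |t - ξ| → φ t = 0) (a : A) :
    ‖cfc (fun t => (t - ξ) * φ t) a‖ ≤ δ :=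
  norm_cfc_le hδ fun t _ => abs_sub_mul_le_of_vanishing hδ hφ0 hφ1 hφsupp t

end FunctionalCalculus

theorem spectrally_localized_approx_eigenfunction_general
    {E : Type*} [NormedAddCommGroup E] [InnerProductSpace ℂ E] [CompleteSpace E]
    (H : E →L[ℂ] E) (hH : IsSelfAdjoint H) (ξ δ ε : ℝ) (hδ : 0 < δ)
    (f : E) (hf : ‖f‖ = 1)
    (φ : ℝ → ℝ) (hφc : Continuous φ) (hφ0 : ∀ t, 0 ≤ φ t) (hφ1 : ∀ t, φ t ≤ 1)
    (hφsupp : ∀ t, δ < |t - ξ| → φ t = 0)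
    (hloc : ‖f - cfc φ H f‖ ≤ ε) :
    ‖H f - (ξ : ℂ) • f‖ ≤ δ + ‖H - (ξ : ℂ) • (1 : E →L[ℂ] E)‖ * ε := by
  set T := H - (ξ : ℂ) • (1 : E →L[ℂ] E)
  set Ψ := cfc (fun t => (t - ξ) * φ t) H with hΨ_def
  have hΨ : Ψ = T * cfc φ H := by
    rw [hΨ_def, cfc_sub_const_mul hφc ξ hH, Algebra.algebraMap_eq_smul_one, ← Complex.coe_smul]
  have hsplit : H f - (ξ : ℂ) • f = T (f - cfc φ H f) + Ψ f := by
    simp only [hΨ, T, mul_apply_eq_comp, sub_apply, smul_apply, one_apply_eq_self, map_sub,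
      sub_add_cancel]
  calc ‖H f - (ξ : ℂ) • f‖ ≤ ‖T‖ * ‖f - cfc φ H f‖ + ‖Ψ‖ * ‖f‖ := by
        rw [hsplit]
        exact (norm_add_le _ _).trans (add_le_add (T.le_opNorm _) (Ψ.le_opNorm _))
    _ ≤ ‖T‖ * ε + δ * 1 := by
        rw [hf]
        gcongr
        exact norm_cfc_sub_mul_le hδ.le hφ0 hφ1 hφsupp H
    _ = δ + ‖T‖ * ε := by ring

/-- A spectrally localized vector is an approximate eigenfunction: if `φ` is a continuous
function with values in `[0,1]` vanishing outside `[ξ−δ, ξ+δ]` and `‖f − φ(H)f‖ ≤ ε`,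
then `‖Hf − ξf‖ ≤ δ + ‖H − ξI‖·ε`. -/
theorem spectrally_localized_approx_eigenfunction
    {E : Type*} [NormedAddCommGroup E] [InnerProductSpace ℂ E] [CompleteSpace E]
    (H : E →L[ℂ] E) (hH : IsSelfAdjoint H) (ξ δ ε : ℝ) (hδ : 0 < δ) (hε : 0 ≤ ε)
    (f : E) (hf : ‖f‖ = 1)
    (φ : ℝ → ℝ) (hφc : Continuous φ) (hφ0 : ∀ t, 0 ≤ φ t) (hφ1 : ∀ t, φ t ≤ 1)
    (hφsupp : ∀ t, δ < |t - ξ| → φ t = 0)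
    (hloc : ‖f - cfc φ H f‖ ≤ ε) :
    ‖H f - (ξ : ℂ) • f‖ ≤ δ + ‖H - (ξ : ℂ) • (1 : E →L[ℂ] E)‖ * ε :=
  spectrally_localized_approx_eigenfunction_general H hH ξ δ ε hδ f hf φ hφc hφ0 hφ1 hφsupp hloc
end

section
/- Let V be a metric space, let ℓ²(V) denote the Hilbert space of square-summable complex-valued functions on V, and let H : ℓ²(V) → ℓ²(V) be a bounded linear operator with propagation at most s ≥ 0, meaning: for every u ∈ ℓ²(V) and every x ∈ V, if u(y) = 0 for all y with dist(x,y) ≤ s, then (Hu)(x) = 0. Let λ ∈ ℂ and u ∈ ℓ²(V) satisfy Hu = λu, let A ⊆ V, and let χ_A·u denote the truncation of u to A (equal to u on A and 0 off A). Suppose χ_A·u is supported in the 2s-interior of A, i.e. for every x with u(x) ≠ 0 and x ∈ A, every y with dist(x,y) ≤ 2s lies in A. Then H(χ_A·u) = λ·(χ_A·u). -/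
/-- For an operator `H` on `ℓ²(V)` of propagation at most `s`, the truncation `χ_A·u` of an
eigenfunction `u` of `H` to a set `A`, provided it is supported in the `2s`-interior of `A`,
is again an eigenfunction with the same eigenvalue. -/
theorem truncation_of_eigenfunction_finite_propagation
    {V : Type*} [MetricSpace V]
    (H : lp (fun _ : V => ℂ) 2 →L[ℂ] lp (fun _ : V => ℂ) 2)
    (s : ℝ) (hs : 0 ≤ s)
    (hprop : ∀ (u : lp (fun _ : V => ℂ) 2) (x : V),
      (∀ y, dist x y ≤ s → u y = 0) → H u x = 0)
    (lam : ℂ) (u : lp (fun _ : V => ℂ) 2) (hu : H u = lam • u)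
    (A : Set V) (v : lp (fun _ : V => ℂ) 2)
    (hvA : ∀ x ∈ A, v x = u x) (hvAc : ∀ x ∉ A, v x = 0)
    (hsupp : ∀ x, u x ≠ 0 → x ∈ A → ∀ y, dist x y ≤ 2 * s → y ∈ A) :
    H v = lam • v := by
  ext x
  show H v x = (lam • v) x
  rw [lp.coeFn_smul]
  by_cases h : ∃ y, dist x y ≤ s ∧ v y ≠ 0
  · obtain ⟨y, hy, hvy⟩ := h
    have hyA : y ∈ A := by
      by_contra hyA
      exact hvy (hvAc y hyA)
    have huy : u y ≠ 0 := by rwa [hvA y hyA] at hvy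
    -- every point within distance s of x is in A
    have hz : ∀ z, dist x z ≤ s → z ∈ A := by
      intro z hz
      refine hsupp y huy hyA z ?_
      calc dist y z ≤ dist y x + dist x z := dist_triangle _ _ _
        _ ≤ s + s := add_le_add (by rwa [dist_comm]) hz
        _ = 2 * s := by ring
    have hxA : x ∈ A := hz x (by simpa using hs)
    have hdiff : H (u - v) x = 0 := by
      apply hprop
      intro z hzd
      have hzA := hz z hzd
      have : (u - v : lp (fun _ : V => ℂ) 2) z = u z - v z := lp.coeFn_sub u v ▸ rfl
      rw [this, hvA z hzA, sub_self]
    have : H u x - H v x = 0 := by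
      have := hdiff
      rwa [map_sub, lp.coeFn_sub] at this
    have hHv : H v x = H u x := by linear_combination -this
    rw [hHv, hu, lp.coeFn_smul]
    simp [Pi.smul_apply, hvA x hxA]
  · push_neg at h
    have h0 : H v x = 0 := hprop v x h
    have hvx : v x = 0 := h x (by simpa using hs)
    simp [h0, hvx]
end

section
/- Let V be a countable type and P : V → V → ℝ a stochastic kernel: P x y ≥ 0 for all x, y and ∑'_y P x y = 1 for all x. Define k-step transition probabilities by P₁ = P and P_{k+1} x z = ∑'_y (P x y) · (P_k y z), first-hitting probabilities by F₁ x y = P x y and F_{m+1} x y = ∑'_{z ≠ y} (P x z) · (F_m z y), and Cesàro averages g_n x z = (1/n) ∑_{k=1}^{n} P_k x z. Let x, y ∈ V and suppose the walk is recurrent between x and y in the sense that ∑'_{m ≥ 1} F_m x y = 1 and ∑'_{m ≥ 1} F_m y x = 1. Then lim_{n → ∞} ∑'_z |g_n x z − g_n y z| = 0. -/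
open scoped BigOperators

/-- `kStep P k` is the `(k+1)`-step transition kernel of the Markov kernel `P`:
`kStep P 0 = P` (one step) and `kStep P (k+1) x z = ∑' y, P x y * kStep P k y z`,
so `kStep P (k-1)` is the paper's `P_k`. -/
noncomputable def kStep {V : Type*} (P : V → V → ℝ) : ℕ → V → V → ℝ
  | 0 => P
  | (k + 1) => fun x z => ∑' y, P x y * kStep P k y z

/-- `firstHit P m x y` is the probability that the walk started at `x` first hits `y`
at time `m+1`: `firstHit P 0 = P` (the paper's `F₁`) and
`firstHit P (m+1) x y = ∑'_{z ≠ y} P x z * firstHit P m z y` (the paper's `F_{m+2}`). -/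
noncomputable def firstHit {V : Type*} [DecidableEq V] (P : V → V → ℝ) : ℕ → V → V → ℝ
  | 0 => P
  | (m + 1) => fun x y => ∑' z, if z = y then 0 else P x z * firstHit P m z y

/-- Cesàro average of the first `n` transition kernels:
`cesaro P n x z = (1/n) ∑_{k=1}^{n} P_k x z`. -/
noncomputable def cesaro {V : Type*} (P : V → V → ℝ) (n : ℕ) (x z : V) : ℝ :=
  (1 / (n : ℝ)) * ∑ k ∈ Finset.range n, kStep P k x z

/-!
Split the walk from `x` at its first visit to `y`: from then on it is a walk from `y` that has run
for fewer steps. Hence, up to time `n`, the occupation measure of the walk from `x` exceeds that of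
the walk from `y` by at most the point mass at `y` plus the paths from `x` that have not met `y`
yet, whose total mass is `∑_{k<n} (1 - ∑_{m ≤ k} F_{m+1} x y)`. Both occupation measures have
mass `n`, so their ℓ¹ distance is at most twice this excess, and `∑_m F_m x y = 1` makes the
Cesàro means of the avoidance probabilities tend to `0`.
-/
open Finset Filter

theorem hasSum_of_tsum_eq_of_ne_zero {ι α : Type*} [AddCommMonoid α] [TopologicalSpace α]
    {f : ι → α} {a : α} (h : ∑' i, f i = a) (ha : a ≠ 0) : HasSum f a := by
  have hf : Summable f := by
    by_contra hf
    exact ha (h ▸ tsum_eq_zero_of_not_summable hf)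
  exact h ▸ hf.hasSum

theorem hasSum_tsum_mul_of_nonneg {ι κ : Type*} {p : ι → ℝ} {K : ι → κ → ℝ} {a : ℝ}
    (hp : ∀ i, 0 ≤ p i) (hK : ∀ i j, 0 ≤ K i j) (hpa : HasSum p a) (hK1 : ∀ i, HasSum (K i) 1) :
    HasSum (fun j => ∑' i, p i * K i j) a := by
  set f : ι × κ → ℝ := fun q => p q.1 * K q.1 q.2
  have hrow : ∀ i, HasSum (fun j => f (i, j)) (p i) := fun i => by
    simpa using (hK1 i).mul_left (p i)
  have hf : Summable f :=
    (summable_prod_of_nonneg fun q => mul_nonneg (hp _) (hK _ _)).2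
      ⟨fun i => (hrow i).summable, hpa.summable.congr fun i => (hrow i).tsum_eq.symm⟩
  have hfa : HasSum f a := hpa.unique (hf.hasSum.prod_fiberwise hrow) ▸ hf.hasSum
  exact ((Equiv.prodComm κ ι).hasSum_iff.2 hfa).prod_fiberwise
    fun j => (hf.prod_symm.prod_factor j).hasSum

theorem tsum_abs_sub_le_two_mul_of_sub_le {ι : Type*} {f g h : ι → ℝ} {a b : ℝ}
    (hf : HasSum f a) (hg : HasSum g a) (hh : HasSum h b) (h0 : ∀ i, 0 ≤ h i)
    (hle : ∀ i, f i - g i ≤ h i) : ∑' i, |f i - g i| ≤ 2 * b := by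
  have hpos : Summable fun i => max (f i - g i) 0 :=
    hh.summable.of_nonneg_of_le (fun _ => le_max_right _ _) fun i => max_le (hle i) (h0 i)
  have habs_eq : (fun i => |f i - g i|) = fun i => 2 * max (f i - g i) 0 - (f i - g i) := by
    funext i
    rcases le_total 0 (f i - g i) with hd | hd
    · rw [abs_of_nonneg hd, max_eq_left hd]; ring
    · rw [abs_of_nonpos hd, max_eq_right hd]; ring
  have habs : HasSum (fun i => |f i - g i|) (2 * ∑' i, max (f i - g i) 0 - (a - a)) :=
    habs_eq ▸ (hpos.hasSum.mul_left 2).sub (hf.sub hg)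
  rw [habs.tsum_eq, sub_self, sub_zero]
  exact mul_le_mul_of_nonneg_left
    (hasSum_le (fun i => max_le (hle i) (h0 i)) hpos.hasSum hh) zero_le_two

section StochasticKernel

variable {V : Type*} [DecidableEq V] {P : V → V → ℝ}

/-- The paper's `P_j` for every `j ≥ 0`, with `P_0` the identity. -/
noncomputable def transition (P : V → V → ℝ) : ℕ → V → V → ℝ
  | 0 => fun x z => if z = x then 1 else 0
  | j + 1 => kStep P j

/-- `avoiding P y k x z` is the probability that the walk from `x` is at `z` at time `k + 1`
without having visited `y` at any of the times `1, …, k + 1`. -/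
noncomputable def avoiding (P : V → V → ℝ) (y : V) : ℕ → V → V → ℝ
  | 0 => fun x z => if z = y then 0 else P x z
  | k + 1 => fun x z => ∑' w, if w = y then 0 else P x w * avoiding P y k w z

variable (hnn : ∀ x y, 0 ≤ P x y) (hP : ∀ x, HasSum (P x) 1)
include hnn

omit [DecidableEq V] in
theorem kStep_nonneg : ∀ k x z, 0 ≤ kStep P k x z
  | 0, x, z => hnn x z
  | k + 1, x, z => tsum_nonneg fun w => mul_nonneg (hnn x w) (kStep_nonneg k w z)

theorem transition_nonneg : ∀ j x z, 0 ≤ transition P j x z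
  | 0, x, z => by dsimp only [transition]; positivity
  | j + 1, x, z => kStep_nonneg hnn j x z

theorem ite_mul_mem_Icc {x y w : V} {c : ℝ} (hc : c ∈ Set.Icc 0 1) :
    (if w = y then 0 else P x w * c) ∈ Set.Icc 0 (P x w) := by
  split_ifs
  · exact ⟨le_rfl, hnn x w⟩
  · exact ⟨mul_nonneg (hnn x w) hc.1, mul_le_of_le_one_right (hnn x w) hc.2⟩

include hP

omit [DecidableEq V] in
theorem hasSum_kStep : ∀ k x, HasSum (kStep P k x) 1
  | 0, x => hP x
  | k + 1, x => hasSum_tsum_mul_of_nonneg (hnn x) (kStep_nonneg hnn k) (hP x) (hasSum_kStep k)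

theorem hasSum_transition : ∀ j x, HasSum (transition P j x) 1
  | 0, x => hasSum_ite_eq x 1
  | j + 1, x => hasSum_kStep hnn hP j x

omit [DecidableEq V] in
theorem kStep_le_one (k : ℕ) (x z : V) : kStep P k x z ≤ 1 :=
  le_hasSum (hasSum_kStep hnn hP k x) z fun w _ => kStep_nonneg hnn k x w

theorem summable_ite_mul {x y : V} {c : V → ℝ} (hc : ∀ w, c w ∈ Set.Icc 0 1) :
    Summable fun w => if w = y then 0 else P x w * c w :=
  (hP x).summable.of_nonneg_of_le (fun w => (ite_mul_mem_Icc hnn (hc w)).1)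
    fun w => (ite_mul_mem_Icc hnn (hc w)).2

theorem tsum_ite_mul_mem_Icc {x y : V} {c : V → ℝ} (hc : ∀ w, c w ∈ Set.Icc 0 1) :
    (∑' w, if w = y then 0 else P x w * c w) ∈ Set.Icc 0 1 :=
  ⟨tsum_nonneg fun w => (ite_mul_mem_Icc hnn (hc w)).1,
    hasSum_le (fun w => (ite_mul_mem_Icc hnn (hc w)).2)
      (summable_ite_mul hnn hP hc).hasSum (hP x)⟩

theorem firstHit_mem_Icc : ∀ m x y, firstHit P m x y ∈ Set.Icc 0 1
  | 0, x, y => ⟨hnn x y, kStep_le_one hnn hP 0 x y⟩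
  | m + 1, _, _ => tsum_ite_mul_mem_Icc hnn hP fun w => firstHit_mem_Icc m w _

theorem avoiding_mem_Icc (y : V) : ∀ k x z, avoiding P y k x z ∈ Set.Icc 0 1
  | 0, x, z => by
    dsimp only [avoiding]
    split_ifs
    exacts [⟨le_rfl, zero_le_one⟩, ⟨hnn x z, kStep_le_one hnn hP 0 x z⟩]
  | k + 1, _, _ => tsum_ite_mul_mem_Icc hnn hP fun w => avoiding_mem_Icc y k w _

/-- The `m`-th summand is the walk that first visits `y` at time `m + 1`. -/
theorem kStep_eq_sum_firstHit_add_avoiding (y : V) : ∀ k x z,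
    kStep P k x z = ∑ m ∈ range (k + 1), firstHit P m x y * transition P (k - m) y z
      + avoiding P y k x z
  | 0, x, z => by
    show P x z = ∑ m ∈ range 1, P x y * (if z = y then 1 else 0) + (if z = y then 0 else P x z)
    by_cases hz : z = y <;> simp [hz]
  | k + 1, x, z => by
    have hrest : ∀ w, (if w = y then 0 else P x w * kStep P k w z)
        = ∑ m ∈ range (k + 1),
            (if w = y then 0 else P x w * firstHit P m w y) * transition P (k - m) y z
          + (if w = y then 0 else P x w * avoiding P y k w z) := fun w => by
      split_ifs
      · simp
      · rw [kStep_eq_sum_firstHit_add_avoiding y k w z, mul_add, mul_sum]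
        simp only [mul_assoc]
    have hsum : ∀ {c : V → ℝ}, (∀ w, c w ∈ Set.Icc 0 1) →
        Summable fun w => if w = y then 0 else P x w * c w := summable_ite_mul hnn hP
    have hstep : Summable fun w => P x w * kStep P k w z :=
      (hP x).summable.of_nonneg_of_le (fun w => mul_nonneg (hnn x w) (kStep_nonneg hnn k w z))
        fun w => mul_le_of_le_one_right (hnn x w) (kStep_le_one hnn hP k w z)
    calc kStep P (k + 1) x z
        = P x y * kStep P k y z + ∑' w, if w = y then 0 else P x w * kStep P k w z :=
          hstep.tsum_eq_add_tsum_ite y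
      _ = _ := by
        rw [tsum_congr hrest, Summable.tsum_add _ (hsum (avoiding_mem_Icc hnn hP y k · z)),
          Summable.tsum_finsetSum fun m _ => (hsum (firstHit_mem_Icc hnn hP m · y)).mul_right _,
          sum_range_succ' _ (k + 1)]
        · simp only [tsum_mul_right, Nat.add_sub_add_right, Nat.sub_zero]
          rw [add_comm _ (firstHit P 0 x y * _), add_assoc]
          rfl
        · exact summable_sum fun m _ => (hsum (firstHit_mem_Icc hnn hP m · y)).mul_right _

theorem hasSum_avoiding (y : V) (k : ℕ) (x : V) :
    HasSum (avoiding P y k x) (1 - ∑ m ∈ range (k + 1), firstHit P m x y) := by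
  have hsplit : avoiding P y k x = fun z => kStep P k x z
      - ∑ m ∈ range (k + 1), firstHit P m x y * transition P (k - m) y z := by
    funext z
    rw [kStep_eq_sum_firstHit_add_avoiding hnn hP y k x z, add_sub_cancel_left]
  rw [hsplit]
  refine (hasSum_kStep hnn hP k x).sub ?_
  simpa using hasSum_sum fun m _ =>
    (hasSum_transition hnn hP (k - m) y).mul_left (firstHit P m x y)

theorem sum_firstHit_le_one (x y : V) : ∀ n, ∑ m ∈ range n, firstHit P m x y ≤ 1
  | 0 => by simp
  | k + 1 => sub_nonneg.1 <| (hasSum_avoiding hnn hP y k x).nonneg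
      fun z => (avoiding_mem_Icc hnn hP y k x z).1

theorem sum_kStep_sub_sum_kStep_le (x y : V) (n : ℕ) (z : V) :
    ∑ k ∈ range n, kStep P k x z - ∑ k ∈ range n, kStep P k y z
      ≤ transition P 0 y z + ∑ k ∈ range n, avoiding P y k x z := by
  have hT := fun j => transition_nonneg hnn j y z
  have hF := fun m => (firstHit_mem_Icc hnn hP m x y).1
  have hhit : ∑ k ∈ range n, ∑ m ∈ range (k + 1), firstHit P m x y * transition P (k - m) y z
      ≤ ∑ j ∈ range (n + 1), transition P j y z :=
    calc _ = ∑ m ∈ range n, firstHit P m x y * ∑ j ∈ range (n - m), transition P j y z := by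
          simp only [sum_range_diag_flip n fun m j => firstHit P m x y * transition P j y z,
            mul_sum]
      _ ≤ ∑ m ∈ range n, firstHit P m x y * ∑ j ∈ range (n + 1), transition P j y z :=
          sum_le_sum fun m _ => mul_le_mul_of_nonneg_left
            (sum_le_sum_of_subset_of_nonneg (range_subset_range.2 (by omega)) fun j _ _ => hT j)
            (hF m)
      _ ≤ _ := by
          rw [← sum_mul]
          exact mul_le_of_le_one_left (sum_nonneg fun j _ => hT j)
            (sum_firstHit_le_one hnn hP x y n)
  rw [sum_range_succ'] at hhit
  change _ ≤ ∑ k ∈ range n, kStep P k y z + _ at hhit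
  simp only [kStep_eq_sum_firstHit_add_avoiding hnn hP y _ x z, sum_add_distrib]
  exact sub_le_iff_le_add'.2 (by linarith)

theorem tsum_abs_cesaro_sub_le (x y : V) (n : ℕ) :
    ∑' z, |cesaro P n x z - cesaro P n y z|
      ≤ 2 / n * (1 + ∑ k ∈ range n, (1 - ∑ m ∈ range (k + 1), firstHit P m x y)) := by
  have hsum : ∀ v, HasSum (fun z => ∑ k ∈ range n, kStep P k v z) n := fun v => by
    simpa using hasSum_sum (s := range n) fun k _ => hasSum_kStep hnn hP k v
  have hbound := tsum_abs_sub_le_two_mul_of_sub_le (hsum x) (hsum y)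
    ((hasSum_transition hnn hP 0 y).add (hasSum_sum fun k _ => hasSum_avoiding hnn hP y k x))
    (fun z => add_nonneg (transition_nonneg hnn 0 y z)
      (sum_nonneg fun k _ => (avoiding_mem_Icc hnn hP y k x z).1))
    (sum_kStep_sub_sum_kStep_le hnn hP x y n)
  have hn : (0 : ℝ) ≤ 1 / n := by positivity
  simp only [cesaro, ← mul_sub, abs_mul, tsum_mul_left, abs_of_nonneg hn]
  exact (mul_le_mul_of_nonneg_left hbound hn).trans_eq (by ring)

end StochasticKernel

theorem tendsto_two_div_mul_one_add_sum {b : ℕ → ℝ} (hb : Tendsto b atTop (nhds 0)) :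
    Tendsto (fun n : ℕ => 2 / n * (1 + ∑ k ∈ range n, b k)) atTop (nhds 0) := by
  have h := ((tendsto_inv_atTop_zero.comp tendsto_natCast_atTop_atTop).add hb.cesaro).const_mul 2
  simp only [add_zero, mul_zero] at h
  refine h.congr fun n => ?_
  simp only [Function.comp_apply]
  ring

theorem cesaro_walk_distributions_close_of_recurrent_general
    {V : Type*} [DecidableEq V] (P : V → V → ℝ)
    (hnn : ∀ x y, 0 ≤ P x y) (hstoch : ∀ x, ∑' y, P x y = 1)
    (x y : V)
    (hxy : ∑' m : ℕ, firstHit P m x y = 1) :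
    Filter.Tendsto (fun n : ℕ => ∑' z, |cesaro P n x z - cesaro P n y z|)
      Filter.atTop (nhds 0) := by
  have hP x := hasSum_of_tsum_eq_of_ne_zero (hstoch x) one_ne_zero
  have hF := hasSum_of_tsum_eq_of_ne_zero hxy one_ne_zero
  refine squeeze_zero (fun n => tsum_nonneg fun z => abs_nonneg _)
    (tsum_abs_cesaro_sub_le hnn hP x y) (tendsto_two_div_mul_one_add_sum ?_)
  simpa using (tendsto_const_nhds (x := (1 : ℝ))).sub
    (hF.tendsto_sum_nat.comp (tendsto_add_atTop_nat 1))

/-- Reiter-type property for recurrent random walks: if the walk a.s. hits `y` from `x`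
and `x` from `y`, then the Cesàro averages of the walk distributions started at `x` and
at `y` are asymptotically close in total variation. -/
theorem cesaro_walk_distributions_close_of_recurrent
    {V : Type*} [Countable V] [DecidableEq V] (P : V → V → ℝ)
    (hnn : ∀ x y, 0 ≤ P x y) (hstoch : ∀ x, ∑' y, P x y = 1)
    (x y : V)
    (hxy : ∑' m : ℕ, firstHit P m x y = 1)
    (hyx : ∑' m : ℕ, firstHit P m y x = 1) :
    Filter.Tendsto (fun n : ℕ => ∑' z, |cesaro P n x z - cesaro P n y z|)
      Filter.atTop (nhds 0) :=
  cesaro_walk_distributions_close_of_recurrent_general P hnn hstoch x y hxy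
end

section
/- Let H be a bounded self-adjoint operator on a complex Hilbert space, let ξ ∈ ℝ, δ > 0, η ≥ 0, and let f be a vector with ‖f‖ = 1 and ‖Hf − ξf‖ ≤ η. Let φ : ℝ → ℝ be continuous with 0 ≤ φ(t) ≤ 1 for all t and with φ(t) = 1 whenever |t − ξ| ≤ δ. Then Re⟨f, φ(H) f⟩ ≥ 1 − η/δ. -/
/-!
Because `φ ≥ 0` and `φ = 1` on the window, `φ` dominates the quadratic `q t = 1 - ((t - ξ) / δ)²`,
so by monotonicity of the functional calculus `Re⟨f, φ(H) f⟩ ≥ ⟨f, q(H) f⟩ = 1 - r²` with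
`r = ‖Hf - ξf‖ / δ`. When `r ≤ 1` this is at least `1 - r ≥ 1 - η/δ`; when `r > 1` the bound
`1 - η/δ` is negative, while `φ(H) ≥ 0`.
-/

open ContinuousLinearMap RCLike

lemma one_sub_sq_div_le_of_eq_one_on_window {φ : ℝ → ℝ} {ξ δ : ℝ} (hδ : 0 < δ)
    (hφ0 : ∀ t, 0 ≤ φ t) (hφwin : ∀ t, |t - ξ| ≤ δ → φ t = 1) (t : ℝ) :
    1 - ((t - ξ) / δ) ^ 2 ≤ φ t := by
  by_cases hnear : |t - ξ| ≤ δ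
  · rw [hφwin t hnear]
    exact sub_le_self _ (sq_nonneg _)
  · have hfar : 1 < ((t - ξ) / δ) ^ 2 := by
      rw [one_lt_sq_iff_one_lt_abs, abs_div, abs_of_pos hδ, one_lt_div hδ]
      exact not_le.mp hnear
    linarith [hφ0 t]

theorem cfc_sub_const_div {A : Type*} [TopologicalSpace A] [Ring A] [StarRing A] [Algebra ℝ A]
    [ContinuousFunctionalCalculus ℝ A IsSelfAdjoint] (a : A) (ha : IsSelfAdjoint a) (ξ δ : ℝ) :
    cfc (fun t => (t - ξ) / δ) a = δ⁻¹ • (a - algebraMap ℝ A ξ) := by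
  simp_rw [div_eq_inv_mul, ← smul_eq_mul]
  rw [cfc_smul δ⁻¹ (fun t => t - ξ) a, cfc_sub _ _ a, cfc_id' ℝ a, cfc_const ξ a]

section InnerProductSpace

variable {𝕜 E : Type*} [RCLike 𝕜] [NormedAddCommGroup E] [InnerProductSpace 𝕜 E]

theorem ContinuousLinearMap.re_inner_apply_le_of_le {A B : E →L[𝕜] E} (h : A ≤ B) (x : E) :
    re (inner 𝕜 x (A x)) ≤ re (inner 𝕜 x (B x)) := by
  have := ((le_def A B).mp h).re_inner_nonneg_right x
  rwa [sub_apply, inner_sub_right, map_sub, sub_nonneg] at this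

theorem IsSelfAdjoint.inner_sq_apply [CompleteSpace E] {S : E →L[𝕜] E} (hS : IsSelfAdjoint S)
    (x : E) : inner 𝕜 x ((S ^ 2) x) = (‖S x‖ ^ 2 : 𝕜) := by
  rw [pow_two, mul_apply_eq_comp, ← inner_self_eq_norm_sq_to_K]
  exact (hS.isSymmetric x (S x)).symm

end InnerProductSpace

theorem re_inner_cfc_one_sub_sq_div {E : Type*} [NormedAddCommGroup E] [InnerProductSpace ℂ E]
    [CompleteSpace E] (H : E →L[ℂ] E) (hH : IsSelfAdjoint H) (ξ δ : ℝ) (x : E) :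
    (inner ℂ x (cfc (fun t => 1 - ((t - ξ) / δ) ^ 2) H x)).re
      = ‖x‖ ^ 2 - ‖H x - (ξ : ℂ) • x‖ ^ 2 / δ ^ 2 := by
  set S := cfc (fun t => (t - ξ) / δ) H with hS
  have hSx : ‖S x‖ ^ 2 = ‖H x - (ξ : ℂ) • x‖ ^ 2 / δ ^ 2 := by
    rw [hS, cfc_sub_const_div H hH]
    simp [norm_smul, Algebra.algebraMap_eq_smul_one, div_eq_inv_mul, Complex.coe_smul, mul_pow]
  rw [cfc_sub _ _ H, cfc_const_one ℝ H, cfc_pow _ 2 H, ← hS, sub_apply, one_apply_eq_self,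
    inner_sub_right, (cfc_predicate _ H : IsSelfAdjoint S).inner_sq_apply, ← hSx,
    inner_self_eq_norm_sq_to_K]
  norm_cast

theorem inner_cfc_ge_of_approx_eigenfunction_general
    {E : Type*} [NormedAddCommGroup E] [InnerProductSpace ℂ E] [CompleteSpace E]
    (H : E →L[ℂ] E) (hH : IsSelfAdjoint H) (ξ δ η : ℝ) (hδ : 0 < δ)
    (f : E) (hf : ‖f‖ = 1) (happrox : ‖H f - (ξ : ℂ) • f‖ ≤ η)
    (φ : ℝ → ℝ) (hφc : Continuous φ) (hφ0 : ∀ t, 0 ≤ φ t)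
    (hφwin : ∀ t, |t - ξ| ≤ δ → φ t = 1) :
    1 - η / δ ≤ (inner ℂ f (cfc φ H f) : ℂ).re := by
  set r := ‖H f - (ξ : ℂ) • f‖ / δ with hr
  rcases le_or_gt r 1 with hnear | hfar
  · have hquad : cfc (fun t => 1 - ((t - ξ) / δ) ^ 2) H ≤ cfc φ H :=
      cfc_mono fun t _ => one_sub_sq_div_le_of_eq_one_on_window hδ hφ0 hφwin t
    calc 1 - η / δ ≤ 1 - r := by rw [hr]; gcongr
      _ ≤ 1 - r ^ 2 := by nlinarith [div_nonneg (norm_nonneg (H f - (ξ : ℂ) • f)) hδ.le]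
      _ = (inner ℂ f (cfc (fun t => 1 - ((t - ξ) / δ) ^ 2) H f)).re := by
        rw [re_inner_cfc_one_sub_sq_div H hH, hf, hr, div_pow, one_pow]
      _ ≤ (inner ℂ f (cfc φ H f)).re := re_inner_apply_le_of_le hquad f
  · have hφH : (cfc φ H).IsPositive := (nonneg_iff_isPositive _).mp (cfc_nonneg fun t _ => hφ0 t)
    have hneg : 1 - η / δ < 0 := by
      rw [sub_neg, one_lt_div hδ]
      rw [hr, one_lt_div hδ] at hfar
      linarith
    exact hneg.le.trans (hφH.re_inner_nonneg_right f)

/-- If `f` is a unit vector with `‖Hf − ξf‖ ≤ η` and `φ` is a continuous function with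
values in `[0,1]` equal to `1` on `[ξ−δ, ξ+δ]`, then `Re⟨f, φ(H) f⟩ ≥ 1 − η/δ`. -/
theorem inner_cfc_ge_of_approx_eigenfunction
    {E : Type*} [NormedAddCommGroup E] [InnerProductSpace ℂ E] [CompleteSpace E]
    (H : E →L[ℂ] E) (hH : IsSelfAdjoint H) (ξ δ η : ℝ) (hδ : 0 < δ) (hη : 0 ≤ η)
    (f : E) (hf : ‖f‖ = 1) (happrox : ‖H f - (ξ : ℂ) • f‖ ≤ η)
    (φ : ℝ → ℝ) (hφc : Continuous φ) (hφ0 : ∀ t, 0 ≤ φ t) (hφ1 : ∀ t, φ t ≤ 1)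
    (hφwin : ∀ t, |t - ξ| ≤ δ → φ t = 1) :
    1 - η / δ ≤ (inner ℂ f (cfc φ H f) : ℂ).re :=
  inner_cfc_ge_of_approx_eigenfunction_general H hH ξ δ η hδ f hf happrox φ hφc hφ0 hφwin
end
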